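/- arXiv:2108.05970 — 3 statements merged into one kernel-verified Lean document; each statement's English description precedes it below -/
import Mathlib

section
/- Let t ≥ 3 be an integer and let G = (V,E) be a t-hypergraph with |V| = s ≥ 2 vertices and |E| = m hyperedges. Let k ∈ ℕ be a parameter with 2^{t+2}·log₂(s) ≤ k ≤ s. If m ≥ 3s·((2^{t+3}·s·log₂(s))/k)^{t-2}, then there exists a subset S ⊆ V of size |S| ≤ k that spans at least |S| + k/(2^{t+1}·log₂(s)) hyperedges. -/
open scoped Classical

/-!
The proof is an induction on the maximal edge size. Let `Q` be the ceiling of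
`k / (2^(t+1) log s)` and `R` the `Q` vertices of largest degree: the edges meeting `R`, with `R`
deleted, form a hypergraph of smaller edge size that is dense enough relative to `2Q`, and a set
`S'` spanning `|S'| + 2Q` of them gives `R ∪ S'`, spanning `|R ∪ S'| + Q` edges of `G`.

Edges of size at most two form a multigraph with loops, and more than `2s` of them force a
subgraph of minimum degree three. Breadth-first balls around a vertex of it double in size as long
as they span no more edges than vertices, so some ball of radius at most `log s + 1` spans two
edges besides its breadth-first tree; these two edges and the tree paths from their endpoints to
the root are `O(log s)` vertices spanning one edge more than their number. Removing those edges
and repeating `Q` times gives the set.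
-/

open Finset

namespace Hypergraph

variable {V : Type*}

theorem countP_eq_sum_map_ite {α : Type*} (p : α → Prop) [DecidablePred p] (s : Multiset α) :
    s.countP p = (s.map fun a => if p a then 1 else 0).sum := by
  induction s using Multiset.induction with
  | empty => simp
  | cons a s ih => by_cases h : p a <;> simp [h, ih, add_comm]

theorem sum_countP_mem_eq_sum_card_inter (A : Finset V) (E : Multiset (Finset V)) :
    ∑ v ∈ A, E.countP (v ∈ ·) = (E.map fun e => (e ∩ A).card).sum := by
  induction E using Multiset.induction with
  | empty => simp
  | cons e E ih => simp [Multiset.countP_cons, sum_add_distrib, ih, add_comm, inter_comm]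

theorem exists_three_le_countP (E : Multiset (Finset V)) :
    ∀ W : Finset V, 2 * W.card < Multiset.card (E.filter (· ⊆ W)) →
      ∃ W' : Finset V, 2 * W'.card < Multiset.card (E.filter (· ⊆ W')) ∧
        ∀ v ∈ W', 3 ≤ (E.filter (· ⊆ W')).countP (v ∈ ·) := by
  intro W hW
  by_cases hdeg : ∀ v ∈ W, 3 ≤ (E.filter (· ⊆ W)).countP (v ∈ ·)
  · exact ⟨W, hW, hdeg⟩
  push Not at hdeg
  obtain ⟨v, hv, hv2⟩ := hdeg
  have herase : Multiset.card (E.filter (· ⊆ W.erase v)) =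
      (E.filter (· ⊆ W)).countP (v ∉ ·) := by
    rw [Multiset.countP_eq_card_filter, Multiset.filter_filter]
    exact congrArg _ (Multiset.filter_congr fun e _ => subset_erase.trans and_comm)
  have hsplit := Multiset.card_eq_countP_add_countP (v ∈ ·) (E.filter (· ⊆ W))
  have hcard := card_erase_add_one hv
  exact exists_three_le_countP E (W.erase v) (by omega)
termination_by W => W.card
decreasing_by exact card_erase_lt_of_mem hv

section Ball

variable (E : Multiset (Finset V)) (v₀ : V)

noncomputable def ball : ℕ → Finset V
  | 0 => {v₀}
  | j + 1 => ball j ∪ (E.filter fun e => (e ∩ ball j).Nonempty).toFinset.biUnion id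

variable {E v₀}

theorem ball_zero : ball E v₀ 0 = {v₀} := rfl

theorem mem_ball_succ {w : V} {j : ℕ} :
    w ∈ ball E v₀ (j + 1) ↔ w ∈ ball E v₀ j ∨ ∃ e ∈ E, (e ∩ ball E v₀ j).Nonempty ∧ w ∈ e := by
  simp [ball, and_assoc]

theorem ball_mono : Monotone (ball E v₀) :=
  monotone_nat_of_le_succ fun _ _ hw => mem_ball_succ.2 (Or.inl hw)

theorem root_mem_ball (j : ℕ) : v₀ ∈ ball E v₀ j :=
  ball_mono (Nat.zero_le j) (mem_singleton_self v₀)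

theorem subset_ball_succ {e : Finset V} {j : ℕ} (he : e ∈ E) (h : (e ∩ ball E v₀ j).Nonempty) :
    e ⊆ ball E v₀ (j + 1) :=
  fun _ hw => mem_ball_succ.2 (Or.inr ⟨e, he, h, hw⟩)

theorem ball_subset {W : Finset V} (hEW : ∀ e ∈ E, e ⊆ W) (hv₀ : v₀ ∈ W) :
    ∀ j, ball E v₀ j ⊆ W
  | 0 => by simpa [ball_zero] using hv₀
  | j + 1 => fun w hw => by
    obtain hw | ⟨e, he, -, hwe⟩ := mem_ball_succ.1 hw
    exacts [ball_subset hEW hv₀ j hw, hEW e he hwe]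

theorem card_inter_le_of_card_le_two {e : Finset V} (he : e.card ≤ 2) (B : Finset V) :
    (e ∩ B).card ≤ (if e ⊆ B then 1 else 0) + (if (e ∩ B).Nonempty then 1 else 0) := by
  by_cases hsub : e ⊆ B
  · by_cases hne : (e ∩ B).Nonempty
    · simpa [hsub, hne] using (card_le_card inter_subset_left).trans he
    · simp [hsub, not_nonempty_iff_eq_empty.1 hne]
  · have hlt : (e ∩ B).card < e.card :=
      card_lt_card ⟨inter_subset_left, fun h => hsub fun _ hx => (mem_inter.1 (h hx)).2⟩
    by_cases hne : (e ∩ B).Nonempty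
    · simp only [hsub, hne, if_false, if_true]; omega
    · simp [not_nonempty_iff_eq_empty.1 hne]

/-- An edge meeting `ball j` has at most two vertices and is spanned by `ball (j + 1)`. -/
theorem three_mul_card_ball_le (hE2 : ∀ e ∈ E, e.card ≤ 2) {j : ℕ}
    (hdeg : ∀ v ∈ ball E v₀ j, 3 ≤ E.countP (v ∈ ·)) :
    3 * (ball E v₀ j).card ≤
      Multiset.card (E.filter (· ⊆ ball E v₀ j)) +
        Multiset.card (E.filter (· ⊆ ball E v₀ (j + 1))) := by
  have hmeet : E.countP (fun e => (e ∩ ball E v₀ j).Nonempty) ≤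
      Multiset.card (E.filter (· ⊆ ball E v₀ (j + 1))) := by
    rw [Multiset.countP_eq_card_filter]
    exact Multiset.card_le_card (Multiset.le_filter.2 ⟨Multiset.filter_le _ _, fun e he =>
      subset_ball_succ (Multiset.mem_filter.1 he).1 (Multiset.mem_filter.1 he).2⟩)
  calc 3 * (ball E v₀ j).card = ∑ _v ∈ ball E v₀ j, 3 := by rw [sum_const, smul_eq_mul, mul_comm]
    _ ≤ ∑ v ∈ ball E v₀ j, E.countP (v ∈ ·) := sum_le_sum hdeg
    _ = (E.map fun e => (e ∩ ball E v₀ j).card).sum := sum_countP_mem_eq_sum_card_inter _ _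
    _ ≤ (E.map fun e => (if e ⊆ ball E v₀ j then 1 else 0) +
          (if (e ∩ ball E v₀ j).Nonempty then 1 else 0)).sum :=
        Multiset.sum_map_le_sum_map _ _ fun e he => card_inter_le_of_card_le_two (hE2 e he) _
    _ = E.countP (· ⊆ ball E v₀ j) + E.countP (fun e => (e ∩ ball E v₀ j).Nonempty) := by
        rw [Multiset.sum_map_add, countP_eq_sum_map_ite, countP_eq_sum_map_ite]
    _ ≤ _ := by rw [Multiset.countP_eq_card_filter]; omega

theorem two_pow_le_card_ball (hE2 : ∀ e ∈ E, e.card ≤ 2)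
    (hdeg : ∀ j, ∀ v ∈ ball E v₀ j, 3 ≤ E.countP (v ∈ ·)) :
    ∀ j, (∀ i ≤ j, Multiset.card (E.filter (· ⊆ ball E v₀ i)) ≤ (ball E v₀ i).card) →
      2 ^ j ≤ (ball E v₀ j).card
  | 0, _ => by simp [ball_zero]
  | j + 1, hsparse => by
    have ih := two_pow_le_card_ball hE2 hdeg j fun i hi => hsparse i (by omega)
    have hgrow := three_mul_card_ball_le hE2 (hdeg j)
    have hj := hsparse j (by omega)
    have hj1 := hsparse (j + 1) le_rfl
    rw [pow_succ]
    omega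

theorem exists_card_ball_lt [Fintype V] {W : Finset V} (hE2 : ∀ e ∈ E, e.card ≤ 2)
    (hEW : ∀ e ∈ E, e ⊆ W) (hv₀ : v₀ ∈ W) (hdeg : ∀ v ∈ W, 3 ≤ E.countP (v ∈ ·)) :
    ∃ i ≤ Nat.log 2 (Fintype.card V) + 1,
      (ball E v₀ i).card < Multiset.card (E.filter (· ⊆ ball E v₀ i)) := by
  by_contra! hsparse
  have hgrow := two_pow_le_card_ball hE2 (fun j v hv => hdeg v (ball_subset hEW hv₀ j hv)) _ hsparse
  have hlog := Nat.lt_pow_succ_log_self one_lt_two (Fintype.card V)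
  have := card_le_univ (ball E v₀ (Nat.log 2 (Fintype.card V) + 1))
  omega

variable (E v₀) in
noncomputable def depth (v : V) : ℕ := sInf {j | v ∈ ball E v₀ j}

theorem depth_le {v : V} {j : ℕ} (h : v ∈ ball E v₀ j) : depth E v₀ v ≤ j := Nat.sInf_le h

theorem mem_ball_depth {v : V} {j : ℕ} (h : v ∈ ball E v₀ j) : v ∈ ball E v₀ (depth E v₀ v) :=
  Nat.sInf_mem (s := {j | v ∈ ball E v₀ j}) ⟨j, h⟩

theorem depth_root : depth E v₀ v₀ = 0 :=
  Nat.le_zero.1 (depth_le (j := 0) (mem_singleton_self v₀))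

theorem depth_pos {v : V} {j : ℕ} (h : v ∈ ball E v₀ j) (hv : v ≠ v₀) : 0 < depth E v₀ v := by
  by_contra! h0
  simpa [Nat.le_zero.1 h0, ball_zero, hv] using mem_ball_depth h

theorem exists_parent (hE2 : ∀ e ∈ E, e.card ≤ 2) {v : V} {j : ℕ} (h : v ∈ ball E v₀ j)
    (hv : v ≠ v₀) :
    ∃ u, {v, u} ∈ E ∧ u ∈ ball E v₀ (depth E v₀ v) ∧ depth E v₀ u + 1 = depth E v₀ v := by
  obtain ⟨i, hi⟩ := Nat.exists_eq_add_one_of_ne_zero (depth_pos h hv).ne'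
  have hvi : i ∉ {j | v ∈ ball E v₀ j} := Nat.notMem_of_lt_sInf (by unfold depth at hi; omega)
  have hvi1 := mem_ball_depth h
  rw [hi] at hvi1
  obtain hv' | ⟨e, he, ⟨u, hu⟩, hve⟩ := mem_ball_succ.1 hvi1
  · exact absurd hv' hvi
  obtain ⟨hue, hui⟩ := mem_inter.1 hu
  have huv : u ≠ v := fun h => hvi (h ▸ hui)
  have hpair : {v, u} = e :=
    eq_of_subset_of_card_le (insert_subset hve (singleton_subset_iff.2 hue))
    ((hE2 e he).trans (card_pair huv.symm).ge)
  have hdu := depth_le hui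
  have hdv := depth_le (subset_ball_succ he ⟨u, mem_inter.2 ⟨hue, mem_ball_depth hui⟩⟩ hve)
  refine ⟨u, hpair ▸ he, ball_mono (by omega) hui, by omega⟩

variable (E v₀) in
/-- Junk value `v` where no parent exists, e.g. at the root. -/
noncomputable def parent (v : V) : V :=
  if h : ∃ u, {v, u} ∈ E ∧ u ∈ ball E v₀ (depth E v₀ v) ∧ depth E v₀ u + 1 = depth E v₀ v
  then h.choose else v

theorem parent_spec (hE2 : ∀ e ∈ E, e.card ≤ 2) {v : V} {j : ℕ} (h : v ∈ ball E v₀ j)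
    (hv : v ≠ v₀) :
    {v, parent E v₀ v} ∈ E ∧ parent E v₀ v ∈ ball E v₀ j ∧
      depth E v₀ (parent E v₀ v) + 1 = depth E v₀ v := by
  have hex := exists_parent hE2 h hv
  obtain ⟨he, hu, hd⟩ := hex.choose_spec
  rw [parent, dif_pos hex]
  exact ⟨he, ball_mono (depth_le h) hu, hd⟩

theorem iterate_parent_spec (hE2 : ∀ e ∈ E, e.card ≤ 2) {v : V} {j : ℕ} (h : v ∈ ball E v₀ j) :
    ∀ k ≤ depth E v₀ v, (parent E v₀)^[k] v ∈ ball E v₀ j ∧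
      depth E v₀ ((parent E v₀)^[k] v) + k = depth E v₀ v
  | 0, _ => ⟨h, rfl⟩
  | k + 1, hk => by
    obtain ⟨hmem, hdepth⟩ := iterate_parent_spec hE2 h k (by omega)
    have hne : (parent E v₀)^[k] v ≠ v₀ := by
      rintro heq
      rw [heq, depth_root] at hdepth
      omega
    obtain ⟨-, hmem', hdepth'⟩ := parent_spec hE2 hmem hne
    rw [Function.iterate_succ_apply']
    exact ⟨hmem', by omega⟩

variable (E v₀) in
noncomputable def ancestors (v : V) : Finset V :=
  (range (depth E v₀ v)).image fun k => (parent E v₀)^[k] v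

theorem card_ancestors_le (v : V) : (ancestors E v₀ v).card ≤ depth E v₀ v :=
  card_image_le.trans (card_range _).le

theorem self_mem_ancestors {v : V} {j : ℕ} (h : v ∈ ball E v₀ j) (hv : v ≠ v₀) :
    v ∈ ancestors E v₀ v :=
  mem_image.2 ⟨0, mem_range.2 (depth_pos h hv), rfl⟩

theorem ancestors_subset_ball (hE2 : ∀ e ∈ E, e.card ≤ 2) {v : V} {j : ℕ}
    (h : v ∈ ball E v₀ j) : ancestors E v₀ v ⊆ ball E v₀ j := fun _ hu => by
  obtain ⟨k, hk, rfl⟩ := mem_image.1 hu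
  exact (iterate_parent_spec hE2 h k (mem_range.1 hk).le).1

theorem parent_mem_ancestors_or_eq (hE2 : ∀ e ∈ E, e.card ≤ 2) {u v : V} {j : ℕ}
    (h : v ∈ ball E v₀ j) (hu : u ∈ ancestors E v₀ v) :
    parent E v₀ u ∈ ancestors E v₀ v ∨ parent E v₀ u = v₀ := by
  obtain ⟨k, hk, rfl⟩ := mem_image.1 hu
  rw [← Function.iterate_succ_apply' (parent E v₀)]
  rcases (Nat.succ_le_of_lt (mem_range.1 hk)).lt_or_eq with hlt | heq
  · exact Or.inl (mem_image.2 ⟨k + 1, mem_range.2 hlt, rfl⟩)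
  · obtain ⟨hmem, hdepth⟩ := iterate_parent_spec hE2 h (k + 1) heq.le
    by_contra! hne
    have := depth_pos hmem hne.2
    omega

variable (E v₀) in
/-- The union of the tree paths from the vertices of `X` to the root. -/
noncomputable def treeHull (X : Finset V) : Finset V :=
  insert v₀ (X.biUnion (ancestors E v₀))

section TreeHull

variable {X : Finset V} {i : ℕ}

theorem subset_treeHull (hX : X ⊆ ball E v₀ i) : X ⊆ treeHull E v₀ X := fun w hw => by
  by_cases hne : w = v₀
  · exact hne ▸ mem_insert_self _ _
  · exact mem_insert_of_mem (mem_biUnion.2 ⟨w, hw, self_mem_ancestors (hX hw) hne⟩)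

theorem treeHull_subset_ball (hE2 : ∀ e ∈ E, e.card ≤ 2) (hX : X ⊆ ball E v₀ i) :
    treeHull E v₀ X ⊆ ball E v₀ i :=
  insert_subset (root_mem_ball i) <|
    biUnion_subset.2 fun _ hw => ancestors_subset_ball hE2 (hX hw)

theorem parent_mem_treeHull (hE2 : ∀ e ∈ E, e.card ≤ 2) (hX : X ⊆ ball E v₀ i) {u : V}
    (hu : u ∈ treeHull E v₀ X) (hne : u ≠ v₀) : parent E v₀ u ∈ treeHull E v₀ X := by
  obtain ⟨w, hw, hu⟩ := mem_biUnion.1 ((mem_insert.1 hu).resolve_left hne)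
  rcases parent_mem_ancestors_or_eq hE2 (hX hw) hu with h | h
  · exact mem_insert_of_mem (mem_biUnion.2 ⟨w, hw, h⟩)
  · rw [h]
    exact mem_insert_self _ _

theorem card_treeHull_le (hX : X ⊆ ball E v₀ i) : (treeHull E v₀ X).card ≤ X.card * i + 1 :=
  calc (treeHull E v₀ X).card ≤ (X.biUnion (ancestors E v₀)).card + 1 := card_insert_le _ _
    _ ≤ ∑ w ∈ X, (ancestors E v₀ w).card + 1 := by gcongr; exact card_biUnion_le
    _ ≤ ∑ _w ∈ X, i + 1 := by
        gcongr with w hw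
        exact (card_ancestors_le w).trans (depth_le (hX hw))
    _ = X.card * i + 1 := by rw [sum_const, smul_eq_mul]

end TreeHull

variable (E v₀) in
noncomputable def treeEdges (W : Finset V) : Multiset (Finset V) :=
  (W.erase v₀).val.map fun v => {v, parent E v₀ v}

theorem card_treeEdges {W : Finset V} (hv₀ : v₀ ∈ W) :
    Multiset.card (treeEdges E v₀ W) + 1 = W.card := by
  rw [treeEdges, Multiset.card_map, card_val, card_erase_add_one hv₀]

theorem treeEdges_mono {W W' : Finset V} (h : W ⊆ W') : treeEdges E v₀ W ≤ treeEdges E v₀ W' :=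
  Multiset.map_le_map (val_le_iff.2 (erase_subset_erase v₀ h))

/-- A tree edge `{v, parent v}` determines `v` as its endpoint of larger depth. -/
theorem treeEdges_le_filter (hE2 : ∀ e ∈ E, e.card ≤ 2) {W : Finset V} {j : ℕ}
    (hW : W ⊆ ball E v₀ j) (hclosed : ∀ v ∈ W, v ≠ v₀ → parent E v₀ v ∈ W) :
    treeEdges E v₀ W ≤ E.filter (· ⊆ W) := by
  have hspec : ∀ v ∈ W.erase v₀, {v, parent E v₀ v} ∈ E ∧
      depth E v₀ (parent E v₀ v) + 1 = depth E v₀ v := fun v hv =>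
    have h := parent_spec hE2 (hW (mem_of_mem_erase hv)) (ne_of_mem_erase hv)
    ⟨h.1, h.2.2⟩
  have hinj : ∀ x ∈ (W.erase v₀).val, ∀ y ∈ (W.erase v₀).val,
      ({x, parent E v₀ x} : Finset V) = {y, parent E v₀ y} → x = y := by
    intro x hx y hy hxy
    by_contra hne
    have hx' : x = parent E v₀ y := by
      have : x ∈ ({y, parent E v₀ y} : Finset V) := hxy ▸ mem_insert_self _ _
      simpa [hne] using this
    have hy' : y = parent E v₀ x := by
      have : y ∈ ({x, parent E v₀ x} : Finset V) := hxy ▸ mem_insert_self _ _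
      simpa [Ne.symm hne] using this
    have := (hspec x hx).2
    have := (hspec y hy).2
    rw [← hx'] at *
    rw [← hy'] at *
    omega
  rw [treeEdges, Multiset.le_iff_subset (Multiset.Nodup.map_on hinj (W.erase v₀).nodup)]
  intro f hf
  obtain ⟨v, hv, rfl⟩ := Multiset.mem_map.1 hf
  exact Multiset.mem_filter.2 ⟨(hspec v hv).1, insert_subset (mem_of_mem_erase hv)
    (singleton_subset_iff.2 (hclosed v (mem_of_mem_erase hv) (ne_of_mem_erase hv)))⟩

theorem exists_pair_add_treeEdges_le (hE2 : ∀ e ∈ E, e.card ≤ 2) {i : ℕ}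
    (h : (ball E v₀ i).card < Multiset.card (E.filter (· ⊆ ball E v₀ i))) :
    ∃ e₁ e₂ : Finset V, {e₁, e₂} + treeEdges E v₀ (ball E v₀ i) ≤ E.filter (· ⊆ ball E v₀ i) := by
  set B := ball E v₀ i
  have hT : treeEdges E v₀ B ≤ E.filter (· ⊆ B) :=
    treeEdges_le_filter hE2 subset_rfl fun v hv hne => (parent_spec hE2 hv hne).2.1
  have hTcard := card_treeEdges (E := E) (W := B) (root_mem_ball i)
  obtain ⟨t, ht⟩ : ∃ t, t ∈ Multiset.powersetCard 2 (E.filter (· ⊆ B) - treeEdges E v₀ B) := by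
    refine Multiset.card_pos_iff_exists_mem.1 ?_
    rw [Multiset.card_powersetCard, Multiset.card_sub hT]
    exact Nat.choose_pos (by omega)
  obtain ⟨htle, htcard⟩ := Multiset.mem_powersetCard.1 ht
  obtain ⟨e₁, e₂, rfl⟩ := Multiset.card_eq_two.1 htcard
  exact ⟨e₁, e₂, (le_tsub_iff_right hT).1 htle⟩

/-- The two extra edges together with the tree paths from their endpoints to the root. -/
theorem exists_card_eq_card_add_one_of_card_ball_lt (hE2 : ∀ e ∈ E, e.card ≤ 2) {i : ℕ}
    (h : (ball E v₀ i).card < Multiset.card (E.filter (· ⊆ ball E v₀ i))) :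
    ∃ (U : Finset V) (F : Multiset (Finset V)), F ≤ E ∧ (∀ f ∈ F, f ⊆ U) ∧
      Multiset.card F = U.card + 1 ∧ U.card ≤ 4 * i + 1 := by
  obtain ⟨e₁, e₂, hle⟩ := exists_pair_add_treeEdges_le hE2 h
  have hpair : ∀ e ∈ ({e₁, e₂} : Multiset (Finset V)), e ∈ E ∧ e ⊆ ball E v₀ i := fun e he =>
    Multiset.mem_filter.1 (Multiset.mem_of_le (le_add_right le_rfl |>.trans hle) he)
  obtain ⟨he₁E, he₁⟩ := hpair e₁ (by simp)
  obtain ⟨he₂E, he₂⟩ := hpair e₂ (by simp)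
  have hX : e₁ ∪ e₂ ⊆ ball E v₀ i := union_subset he₁ he₂
  set U := treeHull E v₀ (e₁ ∪ e₂)
  have hUB := treeHull_subset_ball hE2 hX
  have hTU := treeEdges_le_filter hE2 hUB fun _ hu hne => parent_mem_treeHull hE2 hX hu hne
  refine ⟨U, {e₁, e₂} + treeEdges E v₀ U, ?_, ?_, ?_, ?_⟩
  · exact (add_le_add_right (treeEdges_mono hUB) _).trans (hle.trans (Multiset.filter_le _ _))
  · intro f hf
    rcases Multiset.mem_add.1 hf with hf | hf
    · simp only [Multiset.insert_eq_cons, Multiset.mem_cons, Multiset.mem_singleton] at hf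
      rcases hf with rfl | rfl
      exacts [subset_union_left.trans (subset_treeHull hX),
        subset_union_right.trans (subset_treeHull hX)]
    · exact (Multiset.mem_filter.1 (Multiset.mem_of_le hTU hf)).2
  · have := card_treeEdges (E := E) (W := U) (mem_insert_self _ _)
    rw [Multiset.card_add, Multiset.card_pair]
    omega
  · have := card_treeHull_le (E := E) hX
    have : (e₁ ∪ e₂).card ≤ 4 := (card_union_le _ _).trans (by linarith [hE2 _ he₁E, hE2 _ he₂E])
    nlinarith

end Ball

theorem exists_card_eq_card_add_one [Fintype V] {E : Multiset (Finset V)}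
    (hE2 : ∀ e ∈ E, e.card ≤ 2) (hE : 2 * Fintype.card V < Multiset.card E) :
    ∃ (U : Finset V) (F : Multiset (Finset V)), F ≤ E ∧ (∀ f ∈ F, f ⊆ U) ∧
      Multiset.card F = U.card + 1 ∧ U.card ≤ 4 * Nat.log 2 (Fintype.card V) + 5 := by
  obtain ⟨W, hW, hdeg⟩ := exists_three_le_countP E univ (by simpa using hE)
  rcases W.eq_empty_or_nonempty with rfl | ⟨v₀, hv₀⟩
  · obtain ⟨e, he⟩ := Multiset.card_pos_iff_exists_mem.1 (Nat.zero_lt_of_lt hW)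
    obtain ⟨heE, he⟩ := Multiset.mem_filter.1 he
    exact ⟨∅, {e}, Multiset.singleton_le.2 heE, by simpa using he, by simp, by simp⟩
  have hE2' : ∀ e ∈ E.filter (· ⊆ W), e.card ≤ 2 := fun e he =>
    hE2 e (Multiset.mem_of_mem_filter he)
  obtain ⟨i, hi, hlt⟩ :=
    exists_card_ball_lt hE2' (fun e he => (Multiset.mem_filter.1 he).2) hv₀ hdeg
  obtain ⟨U, F, hF, hFU, hcard, hU⟩ := exists_card_eq_card_add_one_of_card_ball_lt hE2' hlt
  exact ⟨U, F, hF.trans (Multiset.filter_le _ _), hFU, hcard, by omega⟩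

theorem exists_card_add_le_card_filter_subset_of_card_le_two [Fintype V] (Q : ℕ) :
    ∀ {E : Multiset (Finset V)}, (∀ e ∈ E, e.card ≤ 2) →
      2 * Fintype.card V + Q * (4 * Nat.log 2 (Fintype.card V) + 6) < Multiset.card E →
      ∃ S : Finset V, S.card + Q ≤ Q * (4 * Nat.log 2 (Fintype.card V) + 6) ∧
        S.card + Q ≤ Multiset.card (E.filter (· ⊆ S)) := by
  induction Q with
  | zero => exact fun _ _ => ⟨∅, by simp, by simp⟩
  | succ Q ih =>
    intro E hE2 hE
    obtain ⟨U, F, hF, hFU, hFcard, hU⟩ := exists_card_eq_card_add_one hE2 (by nlinarith)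
    have hrest : 2 * Fintype.card V + Q * (4 * Nat.log 2 (Fintype.card V) + 6) <
        Multiset.card (E - F) := by
      rw [Multiset.card_sub hF]
      have := Multiset.card_le_card hF
      rw [add_mul] at hE
      omega
    obtain ⟨S, hScard, hSspan⟩ :=
      ih (fun e he => hE2 e (Multiset.mem_of_le (Multiset.sub_le_self _ _) he)) hrest
    have hspan : F + (E - F).filter (· ⊆ S) ≤ E.filter (· ⊆ U ∪ S) := by
      refine Multiset.le_filter.2 ⟨?_, fun f hf => ?_⟩
      · calc F + (E - F).filter (· ⊆ S) ≤ F + (E - F) := add_le_add_right (Multiset.filter_le _ _) _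
          _ = E := add_tsub_cancel_of_le hF
      · rcases Multiset.mem_add.1 hf with hf | hf
        exacts [(hFU f hf).trans subset_union_left,
          (Multiset.mem_filter.1 hf).2.trans subset_union_right]
    have hunion := card_union_le U S
    have := Multiset.card_le_card hspan
    rw [Multiset.card_add] at this
    refine ⟨U ∪ S, by rw [add_mul]; omega, by omega⟩

theorem exists_card_eq_mul_sum_le [Fintype V] (b : V → ℕ) {Q : ℕ} (hQ : Q ≤ Fintype.card V) :
    ∃ R : Finset V, R.card = Q ∧ Q * ∑ v, b v ≤ Fintype.card V * ∑ v ∈ R, b v := by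
  obtain ⟨R, hR, hmax⟩ := exists_max_image (univ.powersetCard Q) (fun T => ∑ v ∈ T, b v)
    (powersetCard_nonempty.2 (by simpa using hQ))
  obtain ⟨-, hRcard⟩ := mem_powersetCard.1 hR
  have hexchange : ∀ o ∉ R, ∀ r ∈ R, b o ≤ b r := by
    intro o ho r hr
    have hswap := hmax (insert o (R.erase r)) <| mem_powersetCard.2 ⟨subset_univ _, by
      rw [card_insert_of_notMem (fun h => ho (mem_of_mem_erase h)), card_erase_of_mem hr]
      have := card_pos.2 ⟨r, hr⟩
      omega⟩
    rw [sum_insert (fun h => ho (mem_of_mem_erase h))] at hswap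
    have := sum_erase_add R b hr
    omega
  have hout : Q * ∑ v ∈ univ \ R, b v ≤ (Fintype.card V - Q) * ∑ v ∈ R, b v :=
    calc Q * ∑ v ∈ univ \ R, b v = ∑ o ∈ univ \ R, ∑ _r ∈ R, b o := by
          simp only [sum_const, hRcard, smul_eq_mul, mul_sum]
      _ ≤ ∑ _o ∈ univ \ R, ∑ r ∈ R, b r :=
          sum_le_sum fun o ho => sum_le_sum fun r hr => hexchange o (mem_sdiff.1 ho).2 r hr
      _ = (Fintype.card V - Q) * ∑ v ∈ R, b v := by
          rw [sum_const, card_sdiff_of_subset (subset_univ R), card_univ, hRcard, smul_eq_mul]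
  refine ⟨R, hRcard, ?_⟩
  calc Q * ∑ v, b v = Q * ∑ v ∈ univ \ R, b v + Q * ∑ v ∈ R, b v := by
        rw [← mul_add, sum_sdiff (subset_univ R)]
    _ ≤ (Fintype.card V - Q) * ∑ v ∈ R, b v + Q * ∑ v ∈ R, b v := by gcongr
    _ = Fintype.card V * ∑ v ∈ R, b v := by rw [← add_mul, Nat.sub_add_cancel hQ]

theorem exists_card_eq_mul_card_le [Fintype V] {E : Multiset (Finset V)} {r Q : ℕ}
    (hE : ∀ e ∈ E, e.card ≤ r) (hQ : Q ≤ Fintype.card V) :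
    ∃ R : Finset V, R.card = Q ∧
      Q * Multiset.card E ≤ Q * Multiset.card (E.filter (· = ∅)) +
        Fintype.card V * (r * Multiset.card (E.filter fun e => (e ∩ R).Nonempty)) := by
  obtain ⟨R, hRcard, hR⟩ := exists_card_eq_mul_sum_le (fun v => E.countP (v ∈ ·)) hQ
  refine ⟨R, hRcard, ?_⟩
  have hnonempty : E.countP (· ≠ ∅) ≤ ∑ v, E.countP (v ∈ ·) := by
    rw [sum_countP_mem_eq_sum_card_inter, countP_eq_sum_map_ite]
    refine Multiset.sum_map_le_sum_map _ _ fun e _ => ?_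
    split_ifs with he
    · simpa using nonempty_iff_ne_empty.2 he
    · exact Nat.zero_le _
  have hmeet : ∑ v ∈ R, E.countP (v ∈ ·) ≤ r * E.countP fun e => (e ∩ R).Nonempty := by
    rw [sum_countP_mem_eq_sum_card_inter, countP_eq_sum_map_ite, ← Multiset.sum_map_mul_left]
    refine Multiset.sum_map_le_sum_map _ _ fun e he => ?_
    split_ifs with hne
    · simpa using (card_le_card inter_subset_left).trans (hE e he)
    · simp [not_nonempty_iff_eq_empty.1 hne]
  rw [Multiset.card_eq_countP_add_countP (· = ∅), ← Multiset.countP_eq_card_filter,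
    ← Multiset.countP_eq_card_filter]
  calc Q * (E.countP (· = ∅) + E.countP (¬· = ∅))
      ≤ Q * E.countP (· = ∅) + Q * ∑ v, E.countP (v ∈ ·) := by rw [mul_add]; gcongr
    _ ≤ _ := add_le_add_right (hR.trans (Nat.mul_le_mul_left _ hmeet)) _

theorem card_filter_map_sdiff (E : Multiset (Finset V)) (R S : Finset V) :
    Multiset.card ((E.map (· \ R)).filter (· ⊆ S)) = Multiset.card (E.filter (· ⊆ R ∪ S)) := by
  rw [Multiset.filter_map, Multiset.card_map]
  exact congrArg _ (Multiset.filter_congr fun e _ => sdiff_le_iff)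

theorem three_mul_pow_le_of_mul_le {n s Q m m' : ℕ} (hQ : 0 < Q) (hQs : Q ≤ s)
    (hm : 3 * s * (4 * s) ^ (n + 1) ≤ m * Q ^ (n + 1))
    (hm' : Q * m ≤ Q * Q + s * ((n + 3) * m')) :
    3 * s * (4 * s) ^ n ≤ m' * (2 * Q) ^ n := by
  set M := (4 * s) ^ n
  set P := Q ^ n
  have hPM : P ≤ M := Nat.pow_le_pow_left (by omega) n
  have hP : 0 < P := pow_pos hQ n
  have hm₁ : 12 * s * s * M ≤ m * Q * P :=
    calc 12 * s * s * M = 3 * s * (4 * s) ^ (n + 1) := by ring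
      _ ≤ m * Q ^ (n + 1) := hm
      _ = m * Q * P := by ring
  have h12 : 12 * Q ≤ m := by
    by_contra! h
    have : m * Q * P < 12 * Q * Q * P := by gcongr
    have : 12 * Q * Q * P ≤ 12 * s * s * M := by gcongr
    omega
  have h11 : 11 * (Q * m) ≤ 12 * (s * ((n + 3) * m')) := by
    have := Nat.mul_le_mul_left Q h12
    linarith
  have hcore : 11 * s * M ≤ (n + 3) * m' * P := by
    refine Nat.le_of_mul_le_mul_left ?_ (by omega : 0 < 12 * s)
    calc 12 * s * (11 * s * M) = 11 * (12 * s * s * M) := by ring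
      _ ≤ 11 * (m * Q * P) := by gcongr
      _ = 11 * (Q * m) * P := by ring
      _ ≤ 12 * (s * ((n + 3) * m')) * P := by gcongr
      _ = 12 * s * ((n + 3) * m' * P) := by ring
  have h2n : 3 * (n + 3) ≤ 11 * 2 ^ n := by
    have := Nat.lt_two_pow_self (n := n)
    have := Nat.one_le_two_pow (n := n)
    omega
  refine Nat.le_of_mul_le_mul_left ?_ (by omega : 0 < n + 3)
  calc (n + 3) * (3 * s * M) = 3 * (n + 3) * (s * M) := by ring
    _ ≤ 11 * 2 ^ n * (s * M) := by gcongr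
    _ = 2 ^ n * (11 * s * M) := by ring
    _ ≤ 2 ^ n * ((n + 3) * m' * P) := by gcongr
    _ = (n + 3) * (m' * (2 * Q) ^ n) := by rw [mul_pow]; ring

theorem exists_card_add_le_card_filter_subset [Fintype V] (n : ℕ) :
    ∀ {E : Multiset (Finset V)} {Q : ℕ}, (∀ e ∈ E, e.card ≤ n + 2) → 0 < Q →
      2 ^ n * Q * (4 * Nat.log 2 (Fintype.card V) + 6) < Fintype.card V →
      3 * Fintype.card V * (4 * Fintype.card V) ^ n ≤ Multiset.card E * Q ^ n →
      ∃ S : Finset V, S.card + Q ≤ 2 ^ n * Q * (4 * Nat.log 2 (Fintype.card V) + 6) ∧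
        S.card + Q ≤ Multiset.card (E.filter (· ⊆ S)) := by
  induction n with
  | zero =>
    intro E Q hE _ hbudget hdense
    simp only [pow_zero, one_mul, mul_one] at hbudget hdense ⊢
    exact exists_card_add_le_card_filter_subset_of_card_le_two Q hE (by omega)
  | succ n ih =>
    intro E Q hE hQ hbudget hdense
    have hQbudget : Q ≤ 2 ^ (n + 1) * Q * (4 * Nat.log 2 (Fintype.card V) + 6) :=
      calc Q = 1 * Q * 1 := by ring
        _ ≤ _ := by have := Nat.one_le_two_pow (n := n); gcongr <;> omega
    by_cases hempty : Q ≤ Multiset.card (E.filter (· = ∅))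
    · refine ⟨∅, by simpa using hQbudget, ?_⟩
      simpa only [subset_empty, card_empty, zero_add] using hempty
    obtain ⟨R, hRcard, hR⟩ := exists_card_eq_mul_card_le (r := n + 3) (Q := Q) hE (by omega)
    set E' := (E.filter fun e => (e ∩ R).Nonempty).map (· \ R)
    have hE' : ∀ e ∈ E', e.card ≤ n + 2 := by
      intro e' he'
      obtain ⟨e, he, rfl⟩ := Multiset.mem_map.1 he'
      obtain ⟨heE, hmeet⟩ := Multiset.mem_filter.1 he
      have := card_sdiff_add_card_inter e R
      have := card_pos.2 hmeet
      have := hE e heE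
      omega
    have hdense' :
        3 * Fintype.card V * (4 * Fintype.card V) ^ n ≤ Multiset.card E' * (2 * Q) ^ n := by
      refine three_mul_pow_le_of_mul_le hQ (by omega) hdense ?_
      rw [Multiset.card_map]
      have := Nat.mul_le_mul_left Q (Nat.le_of_not_le hempty)
      omega
    obtain ⟨S, hScard, hSspan⟩ := ih hE' (by omega) (by rw [pow_succ] at hbudget; linarith) hdense'
    refine ⟨R ∪ S, ?_, ?_⟩
    · have := card_union_le R S
      rw [pow_succ]
      linarith
    · have := card_union_le R S
      rw [card_filter_map_sdiff] at hSspan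
      have := Multiset.card_le_card
        (Multiset.filter_le_filter (· ⊆ R ∪ S) (Multiset.filter_le (fun e => (e ∩ R).Nonempty) E))
      omega

end Hypergraph

open Hypergraph

theorem two_pow_sub_two_mul_mul_lt {t Q L : ℕ} {k ℓ : ℝ} (ht : 2 ≤ t) (hℓ : 5 ≤ ℓ)
    (hL : (L : ℝ) ≤ ℓ) (hq : 2 ≤ k / (2 ^ (t + 1) * ℓ)) (hQ : (Q : ℝ) < k / (2 ^ (t + 1) * ℓ) + 1) :
    ((2 ^ (t - 2) * Q * (4 * L + 6) : ℕ) : ℝ) < k := by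
  obtain ⟨n, rfl⟩ := Nat.exists_eq_add_of_le' ht
  rw [Nat.add_sub_cancel]
  set q := k / (2 ^ (n + 2 + 1) * ℓ)
  have hqℓ : 2 ^ n * q * ℓ = k / 8 := by
    simp only [q, pow_add]; field_simp; ring
  have hk : 0 < k := by
    have : 0 < 2 ^ n * q * ℓ := by positivity
    linarith
  push_cast
  calc (2 : ℝ) ^ n * Q * (4 * L + 6) < 2 ^ n * (3 / 2 * q) * (4 * L + 6) := by gcongr; linarith
    _ ≤ 2 ^ n * (3 / 2 * q) * (26 / 5 * ℓ) := by gcongr; linarith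
    _ = 39 / 40 * k := by linear_combination (39 / 5) * hqℓ
    _ < k := by linarith

theorem five_le_logb_two {s k t : ℕ} (ht : 3 ≤ t) (hs : 2 ≤ s)
    (hk1 : (2 : ℝ) ^ (t + 2) * Real.logb 2 s ≤ k) (hk2 : k ≤ s) : 5 ≤ Real.logb 2 s := by
  have hone : 1 ≤ Real.logb 2 s := by
    rw [Real.le_logb_iff_rpow_le one_lt_two (by positivity)]
    simpa using (Nat.cast_le (α := ℝ)).2 hs
  have h32 : (32 : ℝ) ≤ 2 ^ (t + 2) :=
    calc (32 : ℝ) = 2 ^ 5 := by norm_num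
      _ ≤ 2 ^ (t + 2) := pow_le_pow_right₀ one_le_two (by omega)
  have hk2' : (k : ℝ) ≤ s := by exact_mod_cast hk2
  have h32s : (32 : ℝ) ≤ s := by nlinarith
  rw [Real.le_logb_iff_rpow_le one_lt_two (by positivity)]
  norm_num
  exact_mod_cast h32s

theorem three_mul_pow_le_mul_ceil_pow {t n s k m : ℕ} {ℓ : ℝ} (hℓ : 0 < ℓ) (hk : 0 < k)
    (hm : 3 * s * ((2 ^ (t + 3) * s * ℓ) / k) ^ n ≤ (m : ℝ)) :
    3 * s * (4 * s) ^ n ≤ m * ⌈(k : ℝ) / (2 ^ (t + 1) * ℓ)⌉₊ ^ n := by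
  set q := (k : ℝ) / (2 ^ (t + 1) * ℓ)
  set D := (2 ^ (t + 3) * s * ℓ) / k
  have hDq : D * q = 4 * s := by
    simp only [D, q, pow_add]
    field_simp
    ring
  have h4s : (4 * s : ℝ) ≤ D * ⌈q⌉₊ :=
    hDq ▸ mul_le_mul_of_nonneg_left (Nat.le_ceil q) (by positivity)
  have : (3 * s * (4 * s) ^ n : ℝ) ≤ m * ⌈q⌉₊ ^ n :=
    calc (3 * s * (4 * s) ^ n : ℝ) ≤ 3 * s * (D * ⌈q⌉₊) ^ n := by gcongr
      _ = 3 * s * D ^ n * ⌈q⌉₊ ^ n := by ring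
      _ ≤ m * ⌈q⌉₊ ^ n := by gcongr
  exact_mod_cast this

/-- Let `t ≥ 3` and let `G` be a `t`-hypergraph (every hyperedge has at
most `t` vertices, parallel hyperedges allowed) with `s ≥ 2` vertices and `m` hyperedges.
If `2^{t+2}·log₂ s ≤ k ≤ s` and `m ≥ 3s·((2^{t+3}·s·log₂ s)/k)^{t-2}`, then some vertex
set `S` with `|S| ≤ k` spans at least `|S| + k/(2^{t+1}·log₂ s)` hyperedges. -/
theorem stmt_1 (V : Type*) [Fintype V] (t : ℕ) (ht : 3 ≤ t)
    (E : Multiset (Finset V)) (s m k : ℕ)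
    (hs : Fintype.card V = s) (hs2 : 2 ≤ s)
    (hE : ∀ e ∈ E, e.card ≤ t)
    (hm : Multiset.card E = m)
    (hk1 : (2 : ℝ) ^ (t + 2) * Real.logb 2 s ≤ (k : ℝ)) (hk2 : k ≤ s)
    (hmlb : (m : ℝ) ≥ 3 * s * ((2 ^ (t + 3) * s * Real.logb 2 s) / k) ^ (t - 2)) :
    ∃ S : Finset V, S.card ≤ k ∧
      (S.card : ℝ) + (k : ℝ) / (2 ^ (t + 1) * Real.logb 2 s) ≤
        (Multiset.card (E.filter (fun e => e ⊆ S)) : ℝ) := by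
  subst hs hm
  set ℓ := Real.logb 2 (Fintype.card V)
  set q := (k : ℝ) / (2 ^ (t + 1) * ℓ)
  have hℓ : 5 ≤ ℓ := five_le_logb_two ht hs2 hk1 hk2
  have hk : 0 < k := by exact_mod_cast (by positivity : (0 : ℝ) < 2 ^ (t + 2) * ℓ).trans_le hk1
  have hq : 2 ≤ q := by
    rw [le_div_iff₀ (by positivity)]
    calc 2 * (2 ^ (t + 1) * ℓ) = 2 ^ (t + 2) * ℓ := by ring
      _ ≤ k := hk1
  have hdense := three_mul_pow_le_mul_ceil_pow (by linarith) hk hmlb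
  have hQq := Nat.le_ceil q
  have hQpos : 0 < ⌈q⌉₊ := Nat.ceil_pos.2 (by linarith)
  have hbudget := two_pow_sub_two_mul_mul_lt (by omega) hℓ (Real.natLog_le_logb _ _) hq
    (Nat.ceil_lt_add_one (by linarith))
  generalize ⌈q⌉₊ = Q at hdense hQq hQpos hbudget
  obtain ⟨S, hScard, hSspan⟩ := exists_card_add_le_card_filter_subset (t - 2)
    (fun e he => (hE e he).trans (by omega)) hQpos
    (by exact_mod_cast hbudget.trans_le (Nat.cast_le.2 hk2)) hdense
  refine ⟨S, ?_, ?_⟩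
  · have : S.card + Q < k := by exact_mod_cast (Nat.cast_le.2 hScard).trans_lt hbudget
    omega
  · calc (S.card : ℝ) + q ≤ S.card + Q := by gcongr
      _ ≤ _ := by exact_mod_cast hSspan
end

section
/- Let G = (V,E) be a multigraph with |V| = s ≥ 2 vertices, and let v ∈ V. Suppose that deg(v) ≥ 1 and deg(u) ≥ 3 for all u ∈ V \ {v}. Then G contains a path (p₁, p₂, …, p_k) and a cycle (c₁, c₂, …, c_ℓ) such that p₁ = v, p_k = c₁, k ≥ 1, ℓ ≥ 1, and k + ℓ ≤ 4·log₂(s). Here a cycle of length 1 means a self-loop at its vertex and a cycle of length 2 means a pair of parallel edges between two vertices. -/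
open scoped Classical

/-- The degree of a vertex `u` in a multigraph given by a multiset of unordered pairs:
every incident edge counts once, except a self-loop at `u`, which counts twice. -/
noncomputable def multigraphDegree {V : Type*} (E : Multiset (Sym2 V)) (u : V) : ℕ :=
  (E.map fun e => if e = Sym2.diag u then 2 else if u ∈ e then 1 else 0).sum

/-!
Grow breadth-first layers from `v` and call a loop, a pair of parallel edges, an edge inside a
layer, or a vertex with two parents in the previous layer a defect. A defect at depth `j ≤ T`
(for two parents, the depth of the parents), closed up by shortest paths back to `v`, gives a
path from `v` ending on a cycle that meets it only there, with at most `2T + 3` vertices in all,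
hence also at most `s + 1`. Without defects every vertex at depth `1 ≤ i ≤ T` has degree at
least `3` but a single neighbour outside layer `i + 1`, so it has two children there and layers
`0, …, T + 1` hold `2 ^ (T + 1)` vertices. Thus `T = ⌊log₂ s⌋` forces a defect, and
`min (2T + 3) (s + 1) ≤ 4 log₂ s`.
-/

open Finset

namespace Multigraph

section Cycles

variable {α : Type*}

def cycleEdges (c : List α) : List (Sym2 α) :=
  (c.zip (c.rotate 1)).map (Function.uncurry Sym2.mk)

lemma cycleEdges_map_range (g : ℕ → α) (n : ℕ) :
    cycleEdges ((List.range n).map g) = (List.range n).map fun t => s(g t, g ((t + 1) % n)) := by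
  apply List.ext_getElem (by simp [cycleEdges])
  intro t _ _
  simp [cycleEdges, List.getElem_rotate]

lemma add_one_mod_eq_ite {t n : ℕ} (ht : t < n) : (t + 1) % n = if t + 1 = n then 0 else t + 1 := by
  split_ifs with h
  · simp [h]
  · exact Nat.mod_eq_of_lt (by omega)

lemma injOn_cycleEdge {g : ℕ → α} {n : ℕ} (hn : 3 ≤ n) (hg : Set.InjOn g (Set.Iio n)) :
    Set.InjOn (fun t => s(g t, g ((t + 1) % n))) (Set.Iio n) := by
  intro t₁ h₁ t₂ h₂ h
  have hsucc : ∀ t ∈ Set.Iio n, (t + 1) % n ∈ Set.Iio n := fun t _ => Nat.mod_lt _ (by omega)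
  rcases Sym2.eq_iff.mp h with ⟨h, -⟩ | ⟨h, h'⟩
  · exact hg h₁ h₂ h
  · have e₁ := hg h₁ (hsucc t₂ h₂) h
    have e₂ := hg (hsucc t₁ h₁) h₂ h'
    simp only [Set.mem_Iio] at h₁ h₂
    rw [add_one_mod_eq_ite h₂] at e₁
    rw [add_one_mod_eq_ite h₁] at e₂
    split_ifs at e₁ e₂ <;> omega

lemma coe_cycleEdges_le {E : Multiset (Sym2 α)} {g : ℕ → α} {n : ℕ} (hn : 3 ≤ n)
    (hg : Set.InjOn g (Set.Iio n)) (hE : ∀ t < n, s(g t, g ((t + 1) % n)) ∈ E) :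
    (cycleEdges ((List.range n).map g) : Multiset (Sym2 α)) ≤ E := by
  rw [cycleEdges_map_range]
  have hnodup : ((List.range n).map fun t => s(g t, g ((t + 1) % n))).Nodup :=
    List.nodup_range.map_on fun a ha b hb =>
      injOn_cycleEdge hn hg (by simpa using ha) (by simpa using hb)
  rw [Multiset.le_iff_subset (Multiset.coe_nodup.mpr hnodup)]
  intro e he
  obtain ⟨t, ht, rfl⟩ := List.mem_map.mp he
  exact hE t (List.mem_range.mp ht)

end Cycles

section Lollipops

variable {V : Type*} {E : Multiset (Sym2 V)} {v : V}

structure IsLollipop (E : Multiset (Sym2 V)) (v : V) (p c : List V) : Prop where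
  path_ne_nil : p ≠ []
  cycle_ne_nil : c ≠ []
  head?_path : p.head? = some v
  getLast?_path : p.getLast? = c.head?
  chain : p.IsChain fun a b => s(a, b) ∈ E
  cycleEdges_le : (cycleEdges c : Multiset (Sym2 V)) ≤ E
  path_nodup : p.Nodup
  nodup_dropLast_append : (p.dropLast ++ c).Nodup

lemma IsLollipop.length_add_length_le [Fintype V] {p c : List V} (h : IsLollipop E v p c) :
    p.length + c.length ≤ Fintype.card V + 1 := by
  have := h.nodup_dropLast_append.length_le_card
  rw [List.length_append, List.length_dropLast] at this
  have := List.length_pos_iff.mpr h.path_ne_nil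
  omega

def HasLollipop (E : Multiset (Sym2 V)) (v : V) (N : ℕ) : Prop :=
  ∃ p c : List V, IsLollipop E v p c ∧ p.length + c.length ≤ N

lemma HasLollipop.mono {N N' : ℕ} (h : HasLollipop E v N) (hN : N ≤ N') : HasLollipop E v N' :=
  let ⟨p, c, hpc, hlen⟩ := h
  ⟨p, c, hpc, hlen.trans hN⟩

lemma hasLollipop_of_injOn {h : ℕ → V} {m n : ℕ} (hn : 0 < n) (h0 : h 0 = v)
    (hinj : Set.InjOn h (Set.Iio (m + n))) (hpath : ∀ t < m, s(h t, h (t + 1)) ∈ E)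
    (hcycle : (cycleEdges ((List.range n).map fun t => h (m + t)) : Multiset (Sym2 V)) ≤ E) :
    HasLollipop E v (m + n + 1) := by
  have hnodup : ((List.range (m + n)).map h).Nodup :=
    List.nodup_range.map_on fun a ha b hb => hinj (by simpa using ha) (by simpa using hb)
  refine ⟨(List.range (m + 1)).map h, (List.range n).map fun t => h (m + t),
    ⟨by simp, by simpa using hn.ne', by simp [List.head?_range, h0],
      by simp [List.getLast?_range, List.head?_range, hn.ne'], ?_, hcycle,
      hnodup.sublist ((List.range_sublist.mpr (by omega)).map h), ?_⟩,
    by simp only [List.length_map, List.length_range]; omega⟩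
  · rw [List.isChain_iff_getElem]
    intro t ht
    simpa using hpath t (by simpa using ht)
  · rwa [List.range_succ, List.map_append, List.map_singleton, List.dropLast_concat,
      ← Function.comp_def, ← List.map_map, ← List.map_append, ← List.range_add]

end Lollipops

section Depth

variable {V : Type*} {E : Multiset (Sym2 V)} {v u w : V}

def simpleGraph (E : Multiset (Sym2 V)) : SimpleGraph V :=
  SimpleGraph.fromEdgeSet {e | e ∈ E}

lemma simpleGraph_adj : (simpleGraph E).Adj u w ↔ s(u, w) ∈ E ∧ u ≠ w :=
  SimpleGraph.fromEdgeSet_adj _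

/-- Loops and multiplicities are forgotten, and `depth E v u = ⊤` if `u` is not reachable. -/
noncomputable def depth (E : Multiset (Sym2 V)) (v u : V) : ℕ∞ :=
  (simpleGraph E).edist v u

lemma depth_eq_zero_iff : depth E v u = 0 ↔ u = v :=
  SimpleGraph.edist_eq_zero_iff.trans eq_comm

lemma depth_le_depth_add_one (h : s(u, w) ∈ E) : depth E v w ≤ depth E v u + 1 := by
  rcases eq_or_ne u w with rfl | hne
  · exact le_self_add
  · calc depth E v w ≤ depth E v u + (simpleGraph E).edist u w := SimpleGraph.edist_triangle
      _ = depth E v u + 1 := by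
        rw [SimpleGraph.edist_eq_one_iff_adj.mpr (simpleGraph_adj.mpr ⟨h, hne⟩)]

lemma exists_depth_eq_of_mem {i : ℕ} (hu : depth E v u = i) (h : s(u, w) ∈ E) :
    ∃ j : ℕ, depth E v w = j ∧ j ≤ i + 1 ∧ i ≤ j + 1 := by
  have hw : depth E v w ≤ (i + 1 : ℕ) := by exact_mod_cast hu ▸ depth_le_depth_add_one h
  obtain ⟨j, hj, hji⟩ := ENat.le_natCast_iff.mp hw
  have hu' := depth_le_depth_add_one (v := v) (Sym2.eq_swap ▸ h)
  rw [hu, hj] at hu'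
  exact ⟨j, hj, hji, by exact_mod_cast hu'⟩

structure IsGeodesic (E : Multiset (Sym2 V)) (v : V) (f : ℕ → V) (j : ℕ) : Prop where
  depth_eq : ∀ t ≤ j, depth E v (f t) = t
  mem : ∀ t < j, s(f t, f (t + 1)) ∈ E

lemma exists_isGeodesic {j : ℕ} (hu : depth E v u = j) :
    ∃ f, IsGeodesic E v f j ∧ f j = u := by
  obtain ⟨p, hp⟩ := SimpleGraph.exists_walk_of_edist_eq_coe hu
  refine ⟨p.getVert, ⟨fun t ht => ?_, fun t ht => ?_⟩, hp ▸ p.getVert_length⟩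
  · have hle : depth E v (p.getVert t) ≤ t := by
      simpa [depth, p.take_length, hp, ht] using SimpleGraph.edist_le (p.take t)
    obtain ⟨k, hk, hkt⟩ := ENat.le_natCast_iff.mp hle
    have hj : (j : ℕ∞) ≤ k + (j - t : ℕ) := by
      rw [← hu, ← hk, ← hp, ← p.drop_length]
      exact SimpleGraph.edist_triangle.trans (add_le_add_right (SimpleGraph.edist_le (p.drop t)) _)
    rw [hk]
    norm_cast at hj ⊢
    omega
  · exact (simpleGraph_adj.mp (p.adj_getVert_succ (hp ▸ ht))).1

namespace IsGeodesic

variable {f : ℕ → V} {j : ℕ}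

lemma apply_zero (hf : IsGeodesic E v f j) : f 0 = v :=
  depth_eq_zero_iff.mp (by exact_mod_cast hf.depth_eq 0 (Nat.zero_le j))

lemma eq_of_apply_eq (hf : IsGeodesic E v f j) {f' : ℕ → V} {k : ℕ} (hf' : IsGeodesic E v f' k)
    {a b : ℕ} (ha : a ≤ j) (hb : b ≤ k) (h : f a = f' b) : a = b := by
  have := hf.depth_eq a ha
  rwa [h, hf'.depth_eq b hb, Nat.cast_inj, eq_comm] at this

lemma snoc (hf : IsGeodesic E v f j) {x : V} (hx : depth E v x = (j + 1 : ℕ))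
    (h : s(f j, x) ∈ E) : IsGeodesic E v (fun t => if t ≤ j then f t else x) (j + 1) := by
  refine ⟨fun t ht => ?_, fun t ht => ?_⟩
  · split_ifs with htj
    · exact hf.depth_eq t htj
    · rwa [show t = j + 1 by omega]
  · rcases Nat.lt_or_ge t j with htj | htj
    · simpa [htj.le, Nat.succ_le_of_lt htj] using hf.mem t htj
    · simpa [show t = j by omega] using h

end IsGeodesic

end Depth

section Constructions

variable {V : Type*} {E : Multiset (Sym2 V)} {v u w : V}

lemma hasLollipop_of_loop {j : ℕ} (hu : depth E v u = j) (h : s(u, u) ∈ E) :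
    HasLollipop E v (j + 2) := by
  obtain ⟨f, hf, rfl⟩ := exists_isGeodesic hu
  refine hasLollipop_of_injOn (m := j) (n := 1) one_pos hf.apply_zero ?_ hf.mem
    (by simpa [cycleEdges])
  intro a ha b hb hab
  exact hf.eq_of_apply_eq hf (Nat.lt_succ_iff.mp ha) (Nat.lt_succ_iff.mp hb) hab

lemma hasLollipop_of_two_le_count {j : ℕ} (hu : depth E v u = j)
    (huw : depth E v u ≤ depth E v w) (hne : u ≠ w) (h : 2 ≤ E.count s(u, w)) :
    HasLollipop E v (j + 3) := by
  obtain ⟨f, hf, rfl⟩ := exists_isGeodesic hu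
  have hw : ∀ t ≤ j, f t ≠ w := by
    intro t ht hft
    have hlt : t < j := lt_of_le_of_ne ht fun htj => hne (htj ▸ hft)
    have hle : depth E v (f j) ≤ depth E v (f t) := hft ▸ huw
    rw [hf.depth_eq j le_rfl, hf.depth_eq t ht, Nat.cast_le] at hle
    omega
  refine hasLollipop_of_injOn (h := fun t => if t ≤ j then f t else w) (m := j) (n := 2) two_pos
    (by simp [hf.apply_zero]) ?_
    (fun t ht => by simpa [ht.le, Nat.succ_le_of_lt ht] using hf.mem t ht) ?_
  · intro a ha b hb hab
    simp only [Set.mem_Iio] at ha hb hab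
    split_ifs at hab with ha' hb' hb'
    · exact hf.eq_of_apply_eq hf ha' hb' hab
    · exact absurd hab (hw a ha')
    · exact absurd hab.symm (hw b hb')
    · omega
  · have hc : cycleEdges ((List.range 2).map fun t => if j + t ≤ j then f (j + t) else w) =
        List.replicate 2 s(f j, w) := by
      simp [cycleEdges, List.range_succ, Sym2.eq_swap (a := w)]
    rw [hc, Multiset.coe_replicate]
    exact Multiset.le_count_iff_replicate_le.mp h

lemma exists_branch_point {α : Type*} {f f' : ℕ → α} (h0 : f 0 = f' 0) {b : ℕ} (hb : f b ≠ f' b) :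
    ∃ m < b, f m = f' m ∧ ∀ t, m < t → t ≤ b → f t ≠ f' t := by
  induction b with
  | zero => exact absurd h0 hb
  | succ b ih =>
    by_cases hb' : f b = f' b
    · exact ⟨b, lt_add_one b, hb', fun t h₁ h₂ => by rwa [show t = b + 1 by omega]⟩
    · obtain ⟨m, hm, hfm, hne⟩ := ih hb'
      refine ⟨m, by omega, hfm, fun t h₁ h₂ => ?_⟩
      rcases Nat.lt_or_ge t (b + 1) with ht | ht
      · exact hne t h₁ (by omega)
      · rwa [show t = b + 1 by omega]

lemma hasLollipop_of_branches {f f' : ℕ → V} {a b m : ℕ} (hf : IsGeodesic E v f a)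
    (hf' : IsGeodesic E v f' b) (hba : b ≤ a) (hab : a ≤ b + 1) (hmb : m < b) (hm : f m = f' m)
    (hne : ∀ t, m < t → t ≤ b → f t ≠ f' t) (hE : s(f a, f' b) ∈ E) :
    HasLollipop E v (a + b + 2 - m) := by
  set n := a + b + 1 - 2 * m
  -- `g` climbs `f` up to `f a`, crosses to `f' b` and descends `f'` to `f' (m + 1)`; from index
  -- `m` on it is a cycle closed by the edge `f' (m + 1) f' m`, simple since depths only repeat
  -- between the two branches, which are disjoint above `m`.
  let g : ℕ → V := fun t => if t ≤ a then f t else f' (a + b + 1 - t)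
  have hg₁ : ∀ t ≤ a, g t = f t := fun t ht => if_pos ht
  have hg₂ : ∀ t, a < t → g t = f' (a + b + 1 - t) := fun t ht => if_neg (by omega)
  have hinj : Set.InjOn g (Set.Iio (m + n)) := by
    intro x hx y hy hxy
    simp only [Set.mem_Iio] at hx hy
    rcases Nat.lt_or_ge a x with hax | hxa <;> rcases Nat.lt_or_ge a y with hay | hya
    · rw [hg₂ x hax, hg₂ y hay] at hxy
      have := hf'.eq_of_apply_eq hf' (by omega) (by omega) hxy
      omega
    · rw [hg₂ x hax, hg₁ y hya] at hxy
      have hyx := hf'.eq_of_apply_eq hf (by omega) hya hxy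
      rw [hyx] at hxy
      exact absurd hxy.symm (hne y (by omega) (by omega))
    · rw [hg₁ x hxa, hg₂ y hay] at hxy
      have hxy' := hf.eq_of_apply_eq hf' hxa (by omega) hxy
      rw [← hxy'] at hxy
      exact absurd hxy (hne x (by omega) (by omega))
    · exact hf.eq_of_apply_eq hf hxa hya (by rwa [hg₁ x hxa, hg₁ y hya] at hxy)
  have hstep : ∀ x < a + b - m, s(g x, g (x + 1)) ∈ E := by
    intro x hx
    rcases lt_trichotomy x a with hxa | rfl | hax
    · rw [hg₁ x hxa.le, hg₁ (x + 1) hxa]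
      exact hf.mem x hxa
    · rwa [hg₁ x le_rfl, hg₂ (x + 1) (lt_add_one x), show x + b + 1 - (x + 1) = b by omega]
    · rw [hg₂ x hax, hg₂ (x + 1) (by omega), Sym2.eq_swap,
        show a + b + 1 - x = a + b + 1 - (x + 1) + 1 by omega]
      exact hf'.mem _ (by omega)
  have hcycle : ∀ t < n, s(g (m + t), g (m + (t + 1) % n)) ∈ E := by
    intro t ht
    rw [add_one_mod_eq_ite ht]
    split_ifs with htn
    · rw [hg₂ _ (by omega), add_zero, hg₁ m (by omega), hm, Sym2.eq_swap,
        show a + b + 1 - (m + t) = m + 1 by omega]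
      exact hf'.mem m hmb
    · exact hstep (m + t) (by omega)
  refine (hasLollipop_of_injOn (by omega) (by rw [hg₁ 0 (Nat.zero_le a), hf.apply_zero]) hinj
    (fun t ht => hstep t (by omega)) (coe_cycleEdges_le (by omega) ?_ hcycle)).mono (by omega)
  intro x hx y hy hxy
  simp only [Set.mem_Iio] at hx hy
  have := hinj (show m + x < m + n by omega) (show m + y < m + n by omega) hxy
  omega

lemma hasLollipop_of_mem_of_depth_eq {j : ℕ} (hu : depth E v u = j) (hw : depth E v w = j)
    (hne : u ≠ w) (h : s(u, w) ∈ E) : HasLollipop E v (2 * j + 2) := by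
  obtain ⟨f, hf, rfl⟩ := exists_isGeodesic hu
  obtain ⟨f', hf', rfl⟩ := exists_isGeodesic hw
  obtain ⟨m, hm, hfm, hdiff⟩ := exists_branch_point (hf.apply_zero.trans hf'.apply_zero.symm) hne
  exact (hasLollipop_of_branches hf hf' le_rfl (by omega) hm hfm hdiff h).mono (by omega)

lemma hasLollipop_of_two_parents {j : ℕ} {x u' : V} (hx : depth E v x = (j + 1 : ℕ))
    (hu : depth E v u = j) (hu' : depth E v u' = j) (hne : u ≠ u') (h : s(u, x) ∈ E)
    (h' : s(u', x) ∈ E) : HasLollipop E v (2 * j + 3) := by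
  obtain ⟨f, hf, rfl⟩ := exists_isGeodesic hu
  obtain ⟨f', hf', rfl⟩ := exists_isGeodesic hu'
  obtain ⟨m, hm, hfm, hdiff⟩ := exists_branch_point (hf.apply_zero.trans hf'.apply_zero.symm) hne
  refine (hasLollipop_of_branches (hf.snoc hx h) hf' (Nat.le_succ j) le_rfl hm
    (by simpa [hm.le] using hfm) (fun t h₁ h₂ => by simpa [h₂] using hdiff t h₁ h₂) ?_).mono
    (by omega)
  simpa [Sym2.eq_swap] using h'

lemma count_le_one_of_not_hasLollipop {T : ℕ} (hT : ¬HasLollipop E v (2 * T + 3)) {i : ℕ}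
    (hu : depth E v u = i) (hiT : i ≤ T) {w : V} (hw : w ≠ u) : E.count s(u, w) ≤ 1 := by
  by_contra! h
  rcases le_or_gt (depth E v u) (depth E v w) with huw | hwu
  · exact hT ((hasLollipop_of_two_le_count hu huw hw.symm h).mono (by omega))
  · obtain ⟨j, hj, -⟩ := ENat.le_natCast_iff.mp (hu ▸ hwu.le)
    have hji : j < i := by rw [hj, hu] at hwu; exact_mod_cast hwu
    rw [Sym2.eq_swap] at h
    exact hT ((hasLollipop_of_two_le_count hj hwu.le hw h).mono (by omega))

end Constructions

section Counting

variable {V : Type*} [Fintype V] {E : Multiset (Sym2 V)} {v u : V}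

lemma edgeWeight_eq_sum (u : V) (e : Sym2 V) :
    (if e = Sym2.diag u then 2 else if u ∈ e then 1 else 0) =
      2 * (if s(u, u) = e then 1 else 0) + ∑ w ∈ univ.erase u, if s(u, w) = e then 1 else 0 := by
  by_cases he : u ∈ e
  · obtain ⟨y, rfl⟩ := Sym2.mem_iff_exists.mp he
    rcases eq_or_ne y u with rfl | hy
    · simp [Sym2.diag]
    · simp [Sym2.diag, hy, hy.symm]
  · have : ∀ w, s(u, w) ≠ e := fun w h => he (h ▸ Sym2.mem_mk_left u w)
    simp [Sym2.diag, he, this, (this u).symm]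

lemma multigraphDegree_eq_sum_count (E : Multiset (Sym2 V)) (u : V) :
    multigraphDegree E u = 2 * E.count s(u, u) + ∑ w ∈ univ.erase u, E.count s(u, w) := by
  induction E using Multiset.induction with
  | empty => simp [multigraphDegree]
  | cons e E ih =>
    rw [multigraphDegree, Multiset.map_cons, Multiset.sum_cons, ← multigraphDegree, ih,
      edgeWeight_eq_sum]
    simp only [Multiset.count_cons, sum_add_distrib]
    ring

lemma multigraphDegree_le_degree (hloop : s(u, u) ∉ E) (hcount : ∀ w ≠ u, E.count s(u, w) ≤ 1) :
    multigraphDegree E u ≤ (simpleGraph E).degree u := by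
  rw [multigraphDegree_eq_sum_count, Multiset.count_eq_zero.mpr hloop, mul_zero, zero_add,
    ← SimpleGraph.card_neighborFinset_eq_degree]
  calc ∑ w ∈ univ.erase u, E.count s(u, w)
      ≤ ∑ w ∈ univ.erase u, if s(u, w) ∈ E then 1 else 0 := by
        refine sum_le_sum fun w hw => ?_
        split_ifs with h
        · exact hcount w (ne_of_mem_erase hw)
        · exact (Multiset.count_eq_zero.mpr h).le
    _ = #((simpleGraph E).neighborFinset u) := by
        rw [sum_boole, Nat.cast_id]
        congr 1
        ext w
        simp [simpleGraph_adj, and_comm, eq_comm]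

end Counting

section Levels

variable {V : Type*} [Fintype V] {E : Multiset (Sym2 V)} {v u : V} {T : ℕ}

noncomputable def level (E : Multiset (Sym2 V)) (v : V) (i : ℕ) : Finset V :=
  univ.filter fun u => depth E v u = i

lemma mem_level {i : ℕ} : u ∈ level E v i ↔ depth E v u = i := by
  simp [level]

lemma card_level_zero : #(level E v 0) = 1 := by
  rw [card_eq_one]
  exact ⟨v, by ext u; simp [mem_level, depth_eq_zero_iff]⟩

lemma sum_card_level_le (n : ℕ) : ∑ i ∈ range n, #(level E v i) ≤ Fintype.card V := by
  rw [← card_biUnion]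
  · exact card_le_univ _
  · intro i _ j _ hij
    refine disjoint_left.mpr fun u hi hj => hij ?_
    exact Nat.cast_injective ((mem_level.mp hi).symm.trans (mem_level.mp hj))

lemma two_le_card_children (hT : ¬HasLollipop E v (2 * T + 3))
    (hdeg : ∀ u, u ≠ v → 3 ≤ multigraphDegree E u) {i : ℕ} (hi : 1 ≤ i) (hiT : i ≤ T)
    (hu : depth E v u = i) : 2 ≤ #((simpleGraph E).neighborFinset u ∩ level E v (i + 1)) := by
  set N := (simpleGraph E).neighborFinset u
  have huv : u ≠ v := by
    rintro rfl
    rw [depth_eq_zero_iff.mpr rfl] at hu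
    exact absurd (Nat.cast_eq_zero.mp hu.symm) (by omega)
  have hloop : s(u, u) ∉ E := fun h => hT ((hasLollipop_of_loop hu h).mono (by omega))
  have hdegree : 3 ≤ #N := by
    rw [SimpleGraph.card_neighborFinset_eq_degree]
    exact (hdeg u huv).trans (multigraphDegree_le_degree hloop
      fun w hw => count_le_one_of_not_hasLollipop hT hu hiT hw)
  have hsplit : N ⊆ (N ∩ level E v (i - 1)) ∪ (N ∩ level E v (i + 1)) := by
    intro w hw
    obtain ⟨hE, hne⟩ := simpleGraph_adj.mp ((SimpleGraph.mem_neighborFinset _ _ _).mp hw)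
    obtain ⟨j, hj, h₁, h₂⟩ := exists_depth_eq_of_mem hu hE
    have hji : j ≠ i := fun h =>
      hT ((hasLollipop_of_mem_of_depth_eq hu (h ▸ hj) hne hE).mono (by omega))
    rcases (by omega : j = i - 1 ∨ j = i + 1) with rfl | rfl <;> simp [hw, mem_level, hj]
  have hparent : #(N ∩ level E v (i - 1)) ≤ 1 := by
    refine card_le_one.mpr fun a ha b hb => by_contra fun hab => hT ?_
    simp only [N, mem_inter, SimpleGraph.mem_neighborFinset, simpleGraph_adj, mem_level] at ha hb
    rw [Sym2.eq_swap] at ha hb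
    exact (hasLollipop_of_two_parents (by rwa [Nat.sub_add_cancel hi]) ha.2 hb.2 hab ha.1.1
      hb.1.1).mono (by omega)
  have := card_le_card hsplit
  have := card_union_le (N ∩ level E v (i - 1)) (N ∩ level E v (i + 1))
  omega

lemma two_mul_card_level_le (hT : ¬HasLollipop E v (2 * T + 3))
    (hdeg : ∀ u, u ≠ v → 3 ≤ multigraphDegree E u) {i : ℕ} (hi : 1 ≤ i) (hiT : i ≤ T) :
    2 * #(level E v i) ≤ #(level E v (i + 1)) := by
  let children (u : V) := (simpleGraph E).neighborFinset u ∩ level E v (i + 1)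
  have hdisj : (level E v i : Set V).PairwiseDisjoint children := by
    intro u₁ h₁ u₂ h₂ hne
    refine disjoint_left.mpr fun x hx₁ hx₂ => hne ?_
    simp only [children, mem_inter, SimpleGraph.mem_neighborFinset, simpleGraph_adj,
      mem_level] at hx₁ hx₂
    by_contra hne
    exact hT ((hasLollipop_of_two_parents hx₁.2 (mem_level.mp h₁) (mem_level.mp h₂) hne hx₁.1.1
      hx₂.1.1).mono (by omega))
  calc 2 * #(level E v i) = ∑ _u ∈ level E v i, 2 := by rw [sum_const, smul_eq_mul, mul_comm]
    _ ≤ ∑ u ∈ level E v i, #(children u) :=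
        sum_le_sum fun u hu => two_le_card_children hT hdeg hi hiT (mem_level.mp hu)
    _ = #((level E v i).biUnion children) := (card_biUnion hdisj).symm
    _ ≤ #(level E v (i + 1)) := card_le_card (biUnion_subset.mpr fun _ _ => inter_subset_right)

lemma level_one_nonempty (hT : ¬HasLollipop E v (2 * T + 3))
    (hdegv : 1 ≤ multigraphDegree E v) : (level E v 1).Nonempty := by
  have hv : depth E v v = (0 : ℕ) := depth_eq_zero_iff.mpr rfl
  have hloop : s(v, v) ∉ E := fun h => hT ((hasLollipop_of_loop hv h).mono (by omega))
  have hdegree := hdegv.trans (multigraphDegree_le_degree hloop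
    fun w hw => count_le_one_of_not_hasLollipop hT hv (Nat.zero_le T) hw)
  obtain ⟨w, hw⟩ := (SimpleGraph.degree_pos_iff_exists_adj _ _).mp hdegree
  obtain ⟨hE, hne⟩ := simpleGraph_adj.mp hw
  obtain ⟨j, hj, hj1, -⟩ := exists_depth_eq_of_mem hv hE
  have hj0 : j ≠ 0 := fun h => hne (depth_eq_zero_iff.mp (by rw [hj, h, Nat.cast_zero])).symm
  exact ⟨w, mem_level.mpr (by rw [hj, show j = 1 by omega])⟩

lemma two_pow_le_card_level (hT : ¬HasLollipop E v (2 * T + 3))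
    (hdeg : ∀ u, u ≠ v → 3 ≤ multigraphDegree E u) (hdegv : 1 ≤ multigraphDegree E v) :
    ∀ i ≤ T, 2 ^ i ≤ #(level E v (i + 1)) := by
  intro i hi
  induction i with
  | zero => simpa using (level_one_nonempty hT hdegv).card_pos
  | succ i ih =>
    calc 2 ^ (i + 1) = 2 * 2 ^ i := pow_succ' 2 i
      _ ≤ 2 * #(level E v (i + 1)) := Nat.mul_le_mul_left 2 (ih (by omega))
      _ ≤ #(level E v (i + 1 + 1)) := two_mul_card_level_le hT hdeg (by omega) hi

lemma two_pow_le_card_of_not_hasLollipop (hT : ¬HasLollipop E v (2 * T + 3))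
    (hdeg : ∀ u, u ≠ v → 3 ≤ multigraphDegree E u) (hdegv : 1 ≤ multigraphDegree E v) :
    2 ^ (T + 1) ≤ Fintype.card V := by
  calc 2 ^ (T + 1) = ∑ i ∈ range (T + 1), 2 ^ i + 1 := by
        rw [Nat.geomSum_eq le_rfl, Nat.div_one, Nat.sub_add_cancel Nat.one_le_two_pow]
    _ ≤ ∑ i ∈ range (T + 1), #(level E v (i + 1)) + #(level E v 0) := by
        rw [card_level_zero]
        gcongr with i hi
        exact two_pow_le_card_level hT hdeg hdegv i (Nat.lt_succ_iff.mp (mem_range.mp hi))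
    _ = ∑ i ∈ range (T + 2), #(level E v i) := (sum_range_succ' (fun i => #(level E v i)) _).symm
    _ ≤ Fintype.card V := sum_card_level_le _

theorem hasLollipop_two_mul_log_add_three (hdeg : ∀ u, u ≠ v → 3 ≤ multigraphDegree E u)
    (hdegv : 1 ≤ multigraphDegree E v) :
    HasLollipop E v (2 * Nat.log 2 (Fintype.card V) + 3) := by
  by_contra hT
  exact absurd (two_pow_le_card_of_not_hasLollipop hT hdeg hdegv)
    (not_le.mpr (Nat.lt_pow_succ_log_self one_lt_two _))

end Levels

lemma natCast_le_four_mul_logb {N s : ℕ} (hs : 2 ≤ s) (hlog : N ≤ 2 * Nat.log 2 s + 3)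
    (hcard : N ≤ s + 1) : (N : ℝ) ≤ 4 * Real.logb 2 s := by
  rcases hs.eq_or_lt with rfl | hs
  · have : (N : ℝ) ≤ 3 := by exact_mod_cast hcard
    rw [Nat.cast_ofNat, Real.logb_self_eq_one one_lt_two]
    linarith
  · have hnat : (Nat.log 2 s : ℝ) ≤ Real.logb 2 s := by exact_mod_cast Real.natLog_le_logb s 2
    have hthree : (3 : ℝ) ≤ 2 * Real.logb 2 s := by
      have hs' : (3 : ℝ) ≤ s := by exact_mod_cast hs
      have : (3 : ℝ) ≤ Real.logb 2 ((s : ℝ) ^ 2) :=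
        (Real.le_logb_iff_rpow_le one_lt_two (by positivity)).mpr
          (by rw [show (2 : ℝ) ^ (3 : ℝ) = 8 by norm_num]; nlinarith)
      rwa [Real.logb_pow, Nat.cast_ofNat] at this
    have : (N : ℝ) ≤ 2 * Nat.log 2 s + 3 := by exact_mod_cast hlog
    linarith

end Multigraph

/-- Let `G` be a multigraph with `s ≥ 2` vertices, and `v` a vertex with
`deg(v) ≥ 1` such that all other vertices have degree at least `3`. Then `G` contains a
path `p = (p₁,…,p_k)` (distinct vertices, consecutive ones joined by edges) starting at
`v` and a cycle `c = (c₁,…,c_ℓ)` (distinct vertices; its `ℓ` closed-walk edges occur in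
`E` with multiplicity, so `ℓ = 1` is a self-loop and `ℓ = 2` a pair of parallel edges)
with `p_k = c₁`, `k, ℓ ≥ 1` and `k + ℓ ≤ 4·log₂(s)`. -/
theorem stmt_3 (V : Type*) [Fintype V] (E : Multiset (Sym2 V)) (s : ℕ)
    (hs : Fintype.card V = s) (hs2 : 2 ≤ s) (v : V)
    (hdegv : 1 ≤ multigraphDegree E v)
    (hdeg : ∀ u : V, u ≠ v → 3 ≤ multigraphDegree E u) :
    ∃ p c : List V, p ≠ [] ∧ c ≠ [] ∧ p.Nodup ∧ c.Nodup ∧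
      p.head? = some v ∧ p.getLast? = c.head? ∧
      p.Chain' (fun a b => Sym2.mk a b ∈ E) ∧
      (((c.zip (c.rotate 1)).map (Function.uncurry Sym2.mk) : List (Sym2 V)) : Multiset (Sym2 V)) ≤ E ∧
      (p.length + c.length : ℝ) ≤ 4 * Real.logb 2 s := by
  subst hs
  obtain ⟨p, c, hpc, hlen⟩ := Multigraph.hasLollipop_two_mul_log_add_three hdeg hdegv
  refine ⟨p, c, hpc.path_ne_nil, hpc.cycle_ne_nil, hpc.path_nodup,
    hpc.nodup_dropLast_append.of_append_right, hpc.head?_path, hpc.getLast?_path, hpc.chain,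
    hpc.cycleEdges_le, ?_⟩
  exact_mod_cast Multigraph.natCast_le_four_mul_logb hs2 hlen hpc.length_add_length_le
end

section
/- Let t ≥ 3, k ≥ t, and let s, m be positive integers satisfying s ≥ e³·k·(m/k)^{1/(t-1)}. Then C(s,k)·C(m,k)·(C(k,t)/C(s,t))^k ≤ e^{-k}, where C(a,b) denotes the binomial coefficient. In particular this quantity is strictly less than 1. -/
/-!
Bound `C(s,k) ≤ (e s/k)^k`, `C(m,k) ≤ (e m/k)^k` and `C(k,t)/C(s,t) ≤ (k/s)^t`. The quantity is then
at most `(e² (m/k) (k/s)^(t-1))^k`, and the hypothesis on `s`, raised to the power `t - 1`, says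
exactly that `(m/k) (k/s)^(t-1) ≤ e^(-3(t-1))`, so the base is at most `e^(2-3(t-1)) ≤ e^(-1)`.
-/

open Real

namespace Nat

theorem descFactorial_mul_pow_le_pow_mul_descFactorial {k s : ℕ} (hks : k ≤ s) (t : ℕ) :
    k.descFactorial t * s ^ t ≤ k ^ t * s.descFactorial t := by
  induction t with
  | zero => simp
  | succ t ih =>
    have hfactor : (k - t) * s ≤ k * (s - t) := by
      rcases le_or_gt t k with htk | hkt
      · zify [htk, htk.trans hks]
        nlinarith
      · simp [Nat.sub_eq_zero_of_le hkt.le]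
    calc k.descFactorial (t + 1) * s ^ (t + 1)
        = ((k - t) * s) * (k.descFactorial t * s ^ t) := by
          rw [descFactorial_succ, pow_succ]; ring
      _ ≤ (k * (s - t)) * (k ^ t * s.descFactorial t) := Nat.mul_le_mul hfactor ih
      _ = k ^ (t + 1) * s.descFactorial (t + 1) := by
          rw [descFactorial_succ, pow_succ]; ring

theorem choose_mul_pow_le_pow_mul_choose {k s : ℕ} (hks : k ≤ s) (t : ℕ) :
    k.choose t * s ^ t ≤ k ^ t * s.choose t := by
  have h := descFactorial_mul_pow_le_pow_mul_descFactorial hks t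
  rw [descFactorial_eq_factorial_mul_choose, descFactorial_eq_factorial_mul_choose] at h
  refine Nat.le_of_mul_le_mul_left ?_ t.factorial_pos
  calc t ! * (k.choose t * s ^ t) = t ! * k.choose t * s ^ t := by ring
    _ ≤ k ^ t * (t ! * s.choose t) := h
    _ = t ! * (k ^ t * s.choose t) := by ring

theorem cast_choose_div_cast_choose_le {k s : ℕ} (hks : k ≤ s) (t : ℕ) :
    (k.choose t : ℝ) / s.choose t ≤ ((k : ℝ) / s) ^ t := by
  rcases Nat.eq_zero_or_pos s with rfl | hs
  · obtain rfl : k = 0 := Nat.le_zero.mp hks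
    rcases t with _ | t <;> simp
  have hsR : (0 : ℝ) < s := by exact_mod_cast hs
  refine div_le_of_le_mul₀ (by positivity) (by positivity) ?_
  rw [div_pow, div_mul_eq_mul_div, le_div_iff₀ (by positivity)]
  exact_mod_cast choose_mul_pow_le_pow_mul_choose hks t

theorem cast_choose_le_exp_one_mul_div_pow (n k : ℕ) :
    (n.choose k : ℝ) ≤ (exp 1 * n / k) ^ k := by
  have hkk : (0 : ℝ) < (k : ℝ) ^ k := by
    rcases Nat.eq_zero_or_pos k with rfl | hk
    · simp
    · positivity
  have hstirling : (k : ℝ) ^ k ≤ exp k * k ! := by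
    have := Real.pow_div_factorial_le_exp (k : ℝ) k.cast_nonneg k
    rwa [div_le_iff₀ (by positivity)] at this
  calc (n.choose k : ℝ) ≤ (n : ℝ) ^ k / k ! := choose_le_pow_div k n
    _ ≤ (n : ℝ) ^ k * exp k / (k : ℝ) ^ k := by
      rw [div_le_div_iff₀ (by positivity) hkk, mul_assoc]
      gcongr
    _ = (exp 1 * n / k) ^ k := by
      rw [div_pow, mul_pow, ← exp_one_pow, mul_comm]

end Nat

theorem choose_mul_choose_mul_choose_ratio_pow_le {k s m n : ℕ} (hk : 0 < k)
    (hks : k ≤ s) :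
    (s.choose k : ℝ) * m.choose k * ((k.choose (n + 1) : ℝ) / s.choose (n + 1)) ^ k ≤
      (exp 2 * ((m : ℝ) / k) * ((k : ℝ) / s) ^ n) ^ k := by
  have hsR : (0 : ℝ) < s := by exact_mod_cast hk.trans_le hks
  calc (s.choose k : ℝ) * m.choose k * ((k.choose (n + 1) : ℝ) / s.choose (n + 1)) ^ k
      ≤ (exp 1 * s / k) ^ k * (exp 1 * m / k) ^ k * (((k : ℝ) / s) ^ (n + 1)) ^ k := by
        gcongr
        · exact Nat.cast_choose_le_exp_one_mul_div_pow s k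
        · exact Nat.cast_choose_le_exp_one_mul_div_pow m k
        · exact Nat.cast_choose_div_cast_choose_le hks (n + 1)
    _ = (exp 2 * ((m : ℝ) / k) * ((k : ℝ) / s) ^ n) ^ k := by
        rw [← mul_pow, ← mul_pow, show (2 : ℝ) = 1 + 1 by norm_num, exp_add, pow_succ]
        congr 1
        field_simp

theorem mul_div_pow_le_exp_neg {k s y : ℝ} {n : ℕ} (hn : n ≠ 0) (hk : 0 ≤ k) (hs : 0 < s)
    (hy : 0 ≤ y) (h : exp 3 * k * y ^ (n⁻¹ : ℝ) ≤ s) :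
    y * (k / s) ^ n ≤ exp (-(3 * n)) := by
  have hle_one : k / s * (exp 3 * y ^ (n⁻¹ : ℝ)) ≤ 1 := by
    rw [div_mul_eq_mul_div, div_le_one hs]
    linarith
  have hpow := pow_le_one₀ (by positivity) hle_one (n := n)
  rw [mul_pow, mul_pow, rpow_inv_natCast_pow hy hn, ← exp_nat_mul] at hpow
  rw [exp_neg, ← one_div, le_div_iff₀ (exp_pos _), mul_comm (3 : ℝ)]
  linarith

theorem stmt_5_general (t k s m : ℕ) (ht : 3 ≤ t) (hk : t ≤ k)
    (h : (s : ℝ) ≥ Real.exp 3 * k * ((m : ℝ) / k) ^ ((1 : ℝ) / ((t : ℝ) - 1))) :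
    (s.choose k : ℝ) * (m.choose k : ℝ) *
        ((k.choose t : ℝ) / (s.choose t : ℝ)) ^ k ≤ Real.exp (-(k : ℝ)) ∧
      (s.choose k : ℝ) * (m.choose k : ℝ) *
        ((k.choose t : ℝ) / (s.choose t : ℝ)) ^ k < 1 := by
  have hk0 : 0 < k := by omega
  suffices hle : (s.choose k : ℝ) * (m.choose k : ℝ) *
      ((k.choose t : ℝ) / (s.choose t : ℝ)) ^ k ≤ exp (-(k : ℝ)) from
    ⟨hle, hle.trans_lt (exp_lt_one_iff.mpr (by simpa using hk0))⟩
  rcases lt_or_ge s k with hsk | hks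
  · simp [Nat.choose_eq_zero_of_lt hsk, (exp_pos _).le]
  rcases lt_or_ge m k with hmk | hmk
  · simp [Nat.choose_eq_zero_of_lt hmk, (exp_pos _).le]
  obtain ⟨n, rfl⟩ : ∃ n, t = n + 1 := ⟨t - 1, by omega⟩
  have hn : (2 : ℝ) ≤ n := by exact_mod_cast (by omega : 2 ≤ n)
  rw [show ((n + 1 : ℕ) : ℝ) - 1 = n by push_cast; ring, one_div] at h
  have hbase : exp 2 * ((m : ℝ) / k) * ((k : ℝ) / s) ^ n ≤ exp (-1) :=
    calc exp 2 * ((m : ℝ) / k) * ((k : ℝ) / s) ^ n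
        = exp 2 * ((m : ℝ) / k * ((k : ℝ) / s) ^ n) := mul_assoc _ _ _
      _ ≤ exp 2 * exp (-(3 * n)) := by
          gcongr
          exact mul_div_pow_le_exp_neg (by omega) (by positivity)
            (by exact_mod_cast hk0.trans_le hks) (by positivity) h
      _ ≤ exp (-1) := by
          rw [← exp_add]
          exact exp_le_exp.mpr (by linarith)
  calc (s.choose k : ℝ) * m.choose k * ((k.choose (n + 1) : ℝ) / s.choose (n + 1)) ^ k
      ≤ (exp 2 * ((m : ℝ) / k) * ((k : ℝ) / s) ^ n) ^ k :=
        choose_mul_choose_mul_choose_ratio_pow_le hk0 hks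
    _ ≤ exp (-1) ^ k := by gcongr
    _ = exp (-(k : ℝ)) := by rw [← exp_nat_mul]; ring_nf

/-- For `t ≥ 3`, `k ≥ t`, and positive integers `s, m` with
`s ≥ e³·k·(m/k)^{1/(t-1)}`, we have
`C(s,k)·C(m,k)·(C(k,t)/C(s,t))^k ≤ e^{-k} < 1`. -/
theorem stmt_5 (t k s m : ℕ) (ht : 3 ≤ t) (hk : t ≤ k) (hs : 0 < s) (hm : 0 < m)
    (h : (s : ℝ) ≥ Real.exp 3 * k * ((m : ℝ) / k) ^ ((1 : ℝ) / ((t : ℝ) - 1))) :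
    (s.choose k : ℝ) * (m.choose k : ℝ) *
        ((k.choose t : ℝ) / (s.choose t : ℝ)) ^ k ≤ Real.exp (-(k : ℝ)) ∧
      (s.choose k : ℝ) * (m.choose k : ℝ) *
        ((k.choose t : ℝ) / (s.choose t : ℝ)) ^ k < 1 :=
  stmt_5_general t k s m ht hk h
end
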